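/- For every function f in C^2[0,1], the n-th Bernstein polynomial B_n(f)(x) = Σ_{i=0}^n f(i/n) C(n,i) x^i (1-x)^{n-i} satisfies |f(x) - B_n(f)(x)| ≤ (1/(8n)) · sup_{t∈[0,1]} |f''(t)| for all x ∈ [0,1]. -/

import Mathlib

/-!
Taylor's formula with Lagrange remainder gives `|f y - f x - f'(x) (y - x)| ≤ M / 2 * (y - x) ^ 2`
on `[0, 1]`, where `M` bounds `|f''|`. The weights `bern n i x` form a probability distribution on
the nodes `i / n` with mean `x` and variance `x (1 - x) / n`, so averaging this inequality over the
nodes cancels the linear term and leaves `M / 2 * x (1 - x) / n ≤ M / (8 n)`.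
-/

noncomputable def bern (n i : ℕ) (x : ℝ) : ℝ := (n.choose i : ℝ) * x ^ i * (1 - x) ^ (n - i)

open Set Finset

section Moments

variable (n : ℕ) (x : ℝ)

lemma bern_eq_eval (i : ℕ) : bern n i x = (bernsteinPolynomial ℝ n i).eval x := by
  simp [bern, bernsteinPolynomial]

lemma bern_nonneg (i : ℕ) (hx : x ∈ Icc (0 : ℝ) 1) : 0 ≤ bern n i x := by
  have : 0 ≤ 1 - x := sub_nonneg.2 hx.2
  have := hx.1
  unfold bern
  positivity

lemma sum_bern : ∑ i ∈ range (n + 1), bern n i x = 1 := by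
  simpa [bern_eq_eval, Polynomial.eval_finsetSum] using
    congrArg (Polynomial.eval x) (bernsteinPolynomial.sum ℝ n)

lemma sum_natCast_mul_bern : ∑ i ∈ range (n + 1), (i : ℝ) * bern n i x = n * x := by
  simpa [bern_eq_eval, Polynomial.eval_finsetSum] using
    congrArg (Polynomial.eval x) (bernsteinPolynomial.sum_smul ℝ n)

lemma sum_sq_mul_bern :
    ∑ i ∈ range (n + 1), ((n : ℝ) * x - i) ^ 2 * bern n i x = n * x * (1 - x) := by
  simpa [bern_eq_eval, Polynomial.eval_finsetSum] using
    congrArg (Polynomial.eval x) (bernsteinPolynomial.variance ℝ n)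

variable {n}

lemma sum_sub_mul_bern (hn : n ≠ 0) :
    ∑ i ∈ range (n + 1), ((i : ℝ) / n - x) * bern n i x = 0 := by
  simp_rw [sub_mul, sum_sub_distrib, div_mul_eq_mul_div, ← sum_div, ← mul_sum,
    sum_natCast_mul_bern, sum_bern]
  field_simp
  ring

lemma sum_sub_sq_mul_bern (hn : n ≠ 0) :
    ∑ i ∈ range (n + 1), ((i : ℝ) / n - x) ^ 2 * bern n i x = x * (1 - x) / n := by
  have hn' : (n : ℝ) ≠ 0 := Nat.cast_ne_zero.2 hn
  have (i : ℕ) : ((i : ℝ) / n - x) ^ 2 = ((n : ℝ) * x - i) ^ 2 / n ^ 2 := by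
    field_simp; ring
  simp_rw [this, div_mul_eq_mul_div, ← sum_div, sum_sq_mul_bern]
  field_simp

end Moments

lemma abs_sub_sum_bern_le {n : ℕ} (hn : n ≠ 0) {g : ℝ → ℝ} {x d K : ℝ} (hx : x ∈ Icc (0 : ℝ) 1)
    (hg : ∀ y ∈ Icc (0 : ℝ) 1, |g y - g x - d * (y - x)| ≤ K * (y - x) ^ 2) :
    |g x - ∑ i ∈ range (n + 1), g (i / n) * bern n i x| ≤ K * (x * (1 - x) / n) := by
  have hnodes : ∀ i ∈ range (n + 1), (i : ℝ) / n ∈ Icc (0 : ℝ) 1 := fun i hi =>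
    ⟨by positivity, div_le_one_of_le₀ (by exact_mod_cast Nat.lt_succ_iff.1 (mem_range.1 hi))
      (Nat.cast_nonneg n)⟩
  have hsplit : g x - ∑ i ∈ range (n + 1), g (i / n) * bern n i x =
      -∑ i ∈ range (n + 1), (g (i / n) - g x - d * ((i : ℝ) / n - x)) * bern n i x := by
    have hexpand : ∑ i ∈ range (n + 1), (g (i / n) - g x - d * ((i : ℝ) / n - x)) * bern n i x =
        ∑ i ∈ range (n + 1), g (i / n) * bern n i x - g x * ∑ i ∈ range (n + 1), bern n i x -
          d * ∑ i ∈ range (n + 1), ((i : ℝ) / n - x) * bern n i x := by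
      rw [mul_sum, mul_sum, ← sum_sub_distrib, ← sum_sub_distrib]
      exact sum_congr rfl fun i _ => by ring
    rw [hexpand, sum_bern, sum_sub_mul_bern x hn]
    ring
  rw [hsplit, abs_neg]
  calc |∑ i ∈ range (n + 1), (g (i / n) - g x - d * ((i : ℝ) / n - x)) * bern n i x|
      ≤ ∑ i ∈ range (n + 1), |g (i / n) - g x - d * ((i : ℝ) / n - x)| * bern n i x := by
        refine (abs_sum_le_sum_abs _ _).trans_eq (sum_congr rfl fun i _ => ?_)
        rw [abs_mul, abs_of_nonneg (bern_nonneg n x i hx)]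
    _ ≤ ∑ i ∈ range (n + 1), K * ((i : ℝ) / n - x) ^ 2 * bern n i x :=
        sum_le_sum fun i hi =>
          mul_le_mul_of_nonneg_right (hg _ (hnodes i hi)) (bern_nonneg n x i hx)
    _ = K * (x * (1 - x) / n) := by
        simp_rw [mul_assoc, ← mul_sum, sum_sub_sq_mul_bern x hn]

lemma taylorWithinEval_one (f : ℝ → ℝ) (s : Set ℝ) (x₀ x : ℝ) :
    taylorWithinEval f 1 s x₀ x = f x₀ + derivWithin f s x₀ * (x - x₀) := by
  simp [taylor_within_apply, mul_comm]

lemma abs_sub_sub_derivWithin_mul_le {f : ℝ → ℝ} {a b M x y : ℝ}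
    (hf : ContDiffOn ℝ 2 f (Icc a b)) (hM : ∀ z ∈ Ioo a b, |iteratedDeriv 2 f z| ≤ M)
    (hx : x ∈ Icc a b) (hy : y ∈ Icc a b) :
    |f y - f x - derivWithin f (Icc a b) x * (y - x)| ≤ M / 2 * (y - x) ^ 2 := by
  rcases eq_or_ne x y with rfl | hxy
  · simp
  have hsub : uIcc x y ⊆ Icc a b := uIcc_subset_Icc hx hy
  have hfxy : ContDiffOn ℝ 2 f (uIcc x y) := hf.mono hsub
  have hud : UniqueDiffOn ℝ (uIcc x y) := uniqueDiffOn_Icc (inf_lt_sup.2 hxy)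
  obtain ⟨ξ, hξ, hrem⟩ := taylor_mean_remainder_lagrange (n := 1) hxy (hfxy.of_le (by norm_num))
    ((hfxy.differentiableOn_iteratedDerivWithin (by norm_num) hud).mono uIoo_subset_uIcc_self)
  have hderiv : derivWithin f (uIcc x y) x = derivWithin f (Icc a b) x :=
    derivWithin_subset hsub (hud x left_mem_uIcc) ((hf.differentiableOn (by norm_num)) x hx)
  have hsecond : iteratedDerivWithin 2 f (uIcc x y) ξ = iteratedDeriv 2 f ξ :=
    iteratedDerivWithin_eq_iteratedDeriv hud (hfxy.contDiffAt (Icc_mem_nhds hξ.1 hξ.2))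
      (uIoo_subset_uIcc_self hξ)
  rw [taylorWithinEval_one, hderiv, hsecond] at hrem
  have hlagrange : f y - f x - derivWithin f (Icc a b) x * (y - x) =
      iteratedDeriv 2 f ξ / 2 * (y - x) ^ 2 := by
    rw [sub_sub, hrem, Nat.factorial_two]
    push_cast
    ring
  rw [hlagrange, abs_mul, abs_div, abs_two, abs_sq]
  gcongr
  exact hM ξ (uIoo_subset_Ioo hx hy hξ)

/- At `a` and `b`, `iteratedDeriv n f` is unrelated to the derivatives of `f` within `[a, b]`;
these two values are bounded separately. -/
lemma bddAbove_abs_iteratedDeriv_image_Icc {f : ℝ → ℝ} {a b : ℝ} {n : ℕ}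
    (hf : ContDiffOn ℝ n f (Icc a b)) :
    BddAbove ((fun t => |iteratedDeriv n f t|) '' Icc a b) := by
  rcases le_or_gt b a with hba | hab
  · exact ((subsingleton_Icc_of_ge hba).image _).finite.bddAbove
  have hcont : ContinuousOn (iteratedDerivWithin n f (Icc a b)) (Icc a b) :=
    hf.continuousOn_iteratedDerivWithin le_rfl (uniqueDiffOn_Icc hab)
  refine (((isCompact_Icc.image_of_continuousOn hcont.abs).bddAbove).union
    (((finite_singleton |iteratedDeriv n f b|).insert |iteratedDeriv n f a|).bddAbove)).mono ?_
  rintro _ ⟨t, ht, rfl⟩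
  rcases eq_endpoints_or_mem_Ioo_of_mem_Icc ht with rfl | rfl | ht'
  · exact Or.inr (mem_insert _ _)
  · exact Or.inr (mem_insert_of_mem _ rfl)
  · refine Or.inl ⟨t, ht, ?_⟩
    dsimp only
    rw [iteratedDerivWithin_eq_iteratedDeriv (uniqueDiffOn_Icc hab)
      (hf.contDiffAt (Icc_mem_nhds ht'.1 ht'.2)) ht]

/-- For `f ∈ C²[0,1]`, the Bernstein polynomial `B_n(f)` satisfies
`|f(x) - B_n(f)(x)| ≤ (1/(8n)) · sup_{t∈[0,1]} |f''(t)|` on `[0,1]`. -/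
theorem bernstein_C2_error (n : ℕ) (hn : 0 < n) (f : ℝ → ℝ)
    (hf : ContDiffOn ℝ 2 f (Set.Icc (0:ℝ) 1)) (x : ℝ) (hx : x ∈ Set.Icc (0:ℝ) 1) :
    |f x - ∑ i ∈ Finset.range (n + 1), f ((i : ℝ) / n) * bern n i x| ≤
      (1 / (8 * n)) * sSup ((fun t => |iteratedDeriv 2 f t|) '' Set.Icc (0:ℝ) 1) := by
  set M := sSup ((fun t => |iteratedDeriv 2 f t|) '' Icc (0:ℝ) 1)
  have hbound : ∀ z ∈ Ioo (0:ℝ) 1, |iteratedDeriv 2 f z| ≤ M := fun z hz =>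
    le_csSup (bddAbove_abs_iteratedDeriv_image_Icc hf)
      (mem_image_of_mem _ (Ioo_subset_Icc_self hz))
  have hM : 0 ≤ M := Real.sSup_nonneg (forall_mem_image.2 fun _ _ => abs_nonneg _)
  have hvar : x * (1 - x) ≤ 1 / 4 := by nlinarith [sq_nonneg (x - 1 / 2)]
  calc |f x - ∑ i ∈ range (n + 1), f ((i : ℝ) / n) * bern n i x|
      ≤ M / 2 * (x * (1 - x) / n) := abs_sub_sum_bern_le hn.ne' hx fun y hy =>
        abs_sub_sub_derivWithin_mul_le hf hbound hx hy
    _ ≤ M / 2 * (1 / 4 / n) := by gcongr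
    _ = 1 / (8 * n) * M := by ring
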